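/- For any graph G, at most two classes of true twins of G are entirely formed by weakly toll extreme vertices; more precisely, the weakly toll extreme vertices of a connected non-complete graph G are contained in T[u] ∪ T[v] for some pair u, v of vertices (where T[x] is the true-twin class of x). -/

import Mathlib

open SimpleGraph

variable {V : Type*}

/-- Closed neighborhood N[x]. -/
def closedNbhd (G : SimpleGraph V) (x : V) : Set V := insert x (G.neighborSet x)

/-- The true-twin class of `x`: vertices with the same closed neighborhood. -/
def twinClass (G : SimpleGraph V) (x : V) : Set V :=
  {y | closedNbhd G y = closedNbhd G x}

/-- A weakly toll walk between distinct nonadjacent endpoints: the first endpoint is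
adjacent only to the second vertex of the walk, and the last endpoint only to the
second-to-last vertex. -/
def IsWeaklyTollWalk (G : SimpleGraph V) {u w : V} (p : G.Walk u w) : Prop :=
  u ≠ w ∧ ¬ G.Adj u w ∧
  (∀ x ∈ p.support, G.Adj u x → x = p.getVert 1) ∧
  (∀ x ∈ p.support, G.Adj x w → x = p.getVert (p.length - 1))

/-- The weakly toll interval of a set. -/
def wtInterval (G : SimpleGraph V) (S : Set V) : Set V :=
  S ∪ {x | ∃ u ∈ S, ∃ w ∈ S, ∃ p : G.Walk u w, IsWeaklyTollWalk G p ∧ x ∈ p.support}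

/-- Weakly toll convex set. -/
def WTConvex (G : SimpleGraph V) (S : Set V) : Prop := wtInterval G S = S

/-- The weakly toll convex hull. -/
def wtHull (G : SimpleGraph V) (S : Set V) : Set V :=
  ⋂₀ {T : Set V | S ⊆ T ∧ WTConvex G T}

/-- The weakly toll interval number. -/
noncomputable def wtn (G : SimpleGraph V) [Fintype V] : ℕ :=
  sInf {n | ∃ S : Finset V, S.card = n ∧ wtInterval G ↑S = Set.univ}

/-- The weakly toll hull number. -/
noncomputable def wth (G : SimpleGraph V) [Fintype V] : ℕ :=
  sInf {n | ∃ S : Finset V, S.card = n ∧ wtHull G ↑S = Set.univ}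

/-- `S` separates some pair of vertices of `G`. -/
def IsSeparator (G : SimpleGraph V) (S : Set V) : Prop :=
  ∃ a, ∃ ha : a ∈ (Sᶜ : Set V), ∃ b, ∃ hb : b ∈ (Sᶜ : Set V),
    G.Reachable a b ∧ ¬ (G.induce (Sᶜ : Set V)).Reachable ⟨a, ha⟩ ⟨b, hb⟩

/-- A clique separator. -/
def IsCliqueSeparator (G : SimpleGraph V) (S : Set V) : Prop :=
  G.IsClique S ∧ IsSeparator G S

/-- A graph is prime if it has no clique separator. -/
def IsPrime (G : SimpleGraph V) : Prop := ∀ S : Set V, ¬ IsCliqueSeparator G S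

/-- Maximal prime subgraph (given by its vertex set). -/
def IsMPSubgraph (G : SimpleGraph V) (M : Set V) : Prop :=
  IsPrime (G.induce M) ∧ ∀ M' : Set V, M ⊆ M' → IsPrime (G.induce M') → M' = M

/-- Extremal mp-subgraph. -/
def IsExtremalMP (G : SimpleGraph V) (M : Set V) : Prop :=
  IsMPSubgraph G M ∧ ∃ M', IsMPSubgraph G M' ∧ M' ≠ M ∧
    ∀ M'', IsMPSubgraph G M'' → M'' ≠ M → M ∩ M'' ⊆ M ∩ M'

/-- Vertices of `M` shared with another mp-subgraph. -/
def Sh (G : SimpleGraph V) (M : Set V) : Set V :=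
  {v | v ∈ M ∧ ∃ M', IsMPSubgraph G M' ∧ M' ≠ M ∧ v ∈ M'}

/-- Vertices exclusive to `M`. -/
def Exc (G : SimpleGraph V) (M : Set V) : Set V := M \ Sh G M

/-- Induced path: a path with no chords. -/
def IsInducedPath (G : SimpleGraph V) {u v : V} (p : G.Walk u v) : Prop :=
  p.IsPath ∧ ∀ i j : ℕ, i + 1 < j → j ≤ p.length → ¬ G.Adj (p.getVert i) (p.getVert j)

/-- Monophonic interval. -/
def monoInterval (G : SimpleGraph V) (S : Set V) : Set V :=
  S ∪ {x | ∃ u ∈ S, ∃ w ∈ S, ∃ p : G.Walk u w, IsInducedPath G p ∧ x ∈ p.support}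

/-- Monophonically convex set. -/
def MonoConvex (G : SimpleGraph V) (S : Set V) : Prop := monoInterval G S = S

/-- Monophonic hull. -/
def monoHull (G : SimpleGraph V) (S : Set V) : Set V :=
  ⋂₀ {T : Set V | S ⊆ T ∧ MonoConvex G T}

/-!
If `y` is weakly toll extreme and `x ∼ y`, every neighbour `c` of `y` lies in `N[x]`: otherwise
`x y c` is a weakly toll walk through `y`. So adjacent extreme vertices are true twins, and
extreme vertices `x, y, z` from three different twin classes are pairwise nonadjacent. Let `x, y`
be the pair at maximum distance, and take shortest paths `P` from `z` to `x` and `Q` from `z` to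
`y`. By maximality, a neighbour of `x` on `Q` is one of the first two vertices of `Q`, and the only
neighbour of `y` on `Q` is its penultimate vertex (symmetrically for `P`). Hence `x Q` (if `x` is
adjacent to the second vertex of `Q`), `y P` reversed (likewise), or `P⁻¹ Q` is a weakly toll
`x`–`y` walk through `z`, so `z` is not extreme.
-/

namespace SimpleGraph.Walk

variable {G : SimpleGraph V}

lemma eq_or_eq_snd_of_adj {a b x s : V} (q : G.Walk a b) (hq : q.length ≤ G.dist x b)
    (hs : s ∈ q.support) (hxs : G.Adj x s) : s = a ∨ s = q.snd := by
  classical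
  have hlen := congrArg length (q.take_spec hs)
  rw [length_append] at hlen
  have hdist : G.dist x b ≤ (q.dropUntil s hs).length + 1 := by
    simpa using G.dist_le (cons hxs (q.dropUntil s hs))
  have hk : (q.takeUntil s hs).length ≤ 1 := by omega
  rw [← q.getVert_length_takeUntil hs]
  interval_cases (q.takeUntil s hs).length <;> simp

lemma eq_penultimate_of_adj {a b s : V} (q : G.Walk a b) (hq : q.length ≤ G.dist a b)
    (hs : s ∈ q.support) (hsb : G.Adj s b) : s = q.penultimate := by
  rw [← snd_reverse]
  refine (q.reverse.eq_or_eq_snd_of_adj ?_ (by simpa using hs) hsb.symm).resolve_left ?_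
  · simpa [G.dist_comm] using hq
  · rintro rfl
    exact G.loopless.irrefl _ hsb

lemma snd_append_of_not_nil {u v w : V} {p : G.Walk u v} (hp : ¬ p.Nil) (q : G.Walk v w) :
    (p.append q).snd = p.snd := by
  rw [snd, getVert_append']
  exact if_pos (not_nil_iff_lt_length.mp hp)

lemma penultimate_append_of_not_nil {u v w : V} (p : G.Walk u v) {q : G.Walk v w}
    (hq : ¬ q.Nil) : (p.append q).penultimate = q.penultimate := by
  have := not_nil_iff_lt_length.mp hq
  rw [penultimate, getVert_append, length_append, if_neg (by omega)]
  congr 1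
  omega

end SimpleGraph.Walk

open SimpleGraph.Walk

section

variable {G : SimpleGraph V}

lemma IsWeaklyTollWalk.reverse {u w : V} {p : G.Walk u w} (hp : IsWeaklyTollWalk G p) :
    IsWeaklyTollWalk G p.reverse := by
  obtain ⟨hne, hnadj, hstart, hend⟩ := hp
  refine ⟨hne.symm, fun h => hnadj h.symm, fun s hs hws => ?_, fun s hs hsu => ?_⟩
  · show s = snd _
    rw [snd_reverse]
    exact hend s (by simpa using hs) hws.symm
  · show s = penultimate _
    rw [penultimate_reverse]
    exact hstart s (by simpa using hs) hsu.symm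

lemma exists_isWeaklyTollWalk_of_adj_snd {x y z : V} (hxy : x ≠ y) (hnxy : ¬ G.Adj x y)
    (hnzx : ¬ G.Adj z x) (q : G.Walk z y) (hq : q.length = G.dist z y)
    (hzy : G.dist z y ≤ G.dist x y) (hnil : ¬ q.Nil) (hxq : G.Adj x q.snd) :
    ∃ p : G.Walk x y, IsWeaklyTollWalk G p ∧ z ∈ p.support := by
  have hsupp : ∀ s, s ∈ (cons hxq (cons (adj_snd hnil).symm q)).support ↔
      s = x ∨ s = q.snd ∨ s ∈ q.support := by
    simp
  refine ⟨cons hxq (cons (adj_snd hnil).symm q), ⟨hxy, hnxy, ?_, ?_⟩, by simp⟩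
  · intro s hs hxs
    rcases (hsupp s).mp hs with rfl | rfl | hs
    · exact absurd hxs (G.loopless.irrefl _)
    · rfl
    · rcases q.eq_or_eq_snd_of_adj (hq ▸ hzy) hs hxs with rfl | rfl
      · exact absurd hxs.symm hnzx
      · rfl
  · intro s hs hsy
    show s = penultimate _
    rw [penultimate_cons_of_not_nil _ _ (by simp), penultimate_cons_of_not_nil _ _ hnil]
    rcases (hsupp s).mp hs with rfl | rfl | hs
    · exact absurd hsy hnxy
    · exact q.eq_penultimate_of_adj hq.le (getVert_mem_support _ _) hsy
    · exact q.eq_penultimate_of_adj hq.le hs hsy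

lemma exists_isWeaklyTollWalk_of_not_adj_snd {x y z : V} (hxy : x ≠ y) (hnxy : ¬ G.Adj x y)
    (hnzx : ¬ G.Adj z x) (hnzy : ¬ G.Adj z y)
    (p : G.Walk z x) (hp : p.length = G.dist z x) (hzx : G.dist z x ≤ G.dist x y)
    (q : G.Walk z y) (hq : q.length = G.dist z y) (hzy : G.dist z y ≤ G.dist x y)
    (hpnil : ¬ p.Nil) (hqnil : ¬ q.Nil) (hyp : ¬ G.Adj y p.snd) (hxq : ¬ G.Adj x q.snd) :
    ∃ w : G.Walk x y, IsWeaklyTollWalk G w ∧ z ∈ w.support := by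
  have hsupp : ∀ s, s ∈ (p.reverse.append q).support ↔ s ∈ p.support ∨ s ∈ q.support := by
    simp [mem_support_append_iff]
  refine ⟨p.reverse.append q, ⟨hxy, hnxy, ?_, ?_⟩, by simp⟩
  · intro s hs hxs
    show s = snd _
    rw [snd_append_of_not_nil (by simpa using hpnil), snd_reverse]
    rcases (hsupp s).mp hs with hs | hs
    · exact p.eq_penultimate_of_adj hp.le hs hxs.symm
    · rcases q.eq_or_eq_snd_of_adj (hq ▸ hzy) hs hxs with rfl | rfl
      · exact absurd hxs.symm hnzx
      · exact absurd hxs hxq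
  · intro s hs hsy
    show s = penultimate _
    rw [penultimate_append_of_not_nil _ hqnil]
    rcases (hsupp s).mp hs with hs | hs
    · rcases p.eq_or_eq_snd_of_adj (by rw [hp, G.dist_comm (u := y)]; exact hzx) hs hsy.symm
        with rfl | rfl
      · exact absurd hsy hnzy
      · exact absurd hsy.symm hyp
    · exact q.eq_penultimate_of_adj hq.le hs hsy

lemma exists_isWeaklyTollWalk_mem_support (hconn : G.Connected) {x y z : V} (hxy : x ≠ y)
    (hzx : z ≠ x) (hzy : z ≠ y) (hnxy : ¬ G.Adj x y) (hnzx : ¬ G.Adj z x) (hnzy : ¬ G.Adj z y)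
    (hdx : G.dist z x ≤ G.dist x y) (hdy : G.dist z y ≤ G.dist x y) :
    ∃ w : G.Walk x y, IsWeaklyTollWalk G w ∧ z ∈ w.support := by
  obtain ⟨p, hp⟩ := hconn.exists_walk_length_eq_dist z x
  obtain ⟨q, hq⟩ := hconn.exists_walk_length_eq_dist z y
  by_cases hxq : G.Adj x q.snd
  · exact exists_isWeaklyTollWalk_of_adj_snd hxy hnxy hnzx q hq hdy (not_nil_of_ne hzy) hxq
  by_cases hyp : G.Adj y p.snd
  · obtain ⟨w, hw, hzw⟩ := exists_isWeaklyTollWalk_of_adj_snd hxy.symm (fun h => hnxy h.symm) hnzy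
      p hp (G.dist_comm (u := y) ▸ hdx) (not_nil_of_ne hzx) hyp
    exact ⟨w.reverse, hw.reverse, by simpa using hzw⟩
  exact exists_isWeaklyTollWalk_of_not_adj_snd hxy hnxy hnzx hnzy p hp hdx q hq hdy
    (not_nil_of_ne hzx) (not_nil_of_ne hzy) hyp hxq

def IsWTExtreme (G : SimpleGraph V) (x : V) : Prop := WTConvex G ({x}ᶜ : Set V)

lemma not_isWTExtreme_of_mem_support {u w z : V} {p : G.Walk u w} (hp : IsWeaklyTollWalk G p)
    (hz : z ∈ p.support) (hzu : z ≠ u) (hzw : z ≠ w) : ¬ IsWTExtreme G z := by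
  intro hext
  have hzI : z ∈ wtInterval G ({z}ᶜ : Set V) := Or.inr ⟨u, hzu.symm, w, hzw.symm, p, hp, hz⟩
  rw [show wtInterval G ({z}ᶜ : Set V) = {z}ᶜ from hext] at hzI
  exact hzI rfl

lemma IsWTExtreme.closedNbhd_subset_of_adj {x y : V} (hy : IsWTExtreme G y) (hxy : G.Adj x y) :
    closedNbhd G y ⊆ closedNbhd G x := by
  rintro c (rfl | hyc)
  · exact Or.inr hxy
  rw [mem_neighborSet] at hyc
  by_contra hc
  simp only [closedNbhd, Set.mem_insert_iff, mem_neighborSet, not_or] at hc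
  have hw : IsWeaklyTollWalk G (cons hxy (cons hyc nil)) := by
    refine ⟨Ne.symm hc.1, hc.2, fun s hs hxs => ?_, fun s hs hsc => ?_⟩ <;>
      simp only [support_cons, support_nil, List.mem_cons, List.not_mem_nil, or_false] at hs
    · rcases hs with rfl | rfl | rfl
      exacts [absurd hxs (G.loopless.irrefl _), rfl, absurd hxs hc.2]
    · rcases hs with rfl | rfl | rfl
      exacts [absurd hsc hc.2, rfl, absurd hsc (G.loopless.irrefl _)]
  exact not_isWTExtreme_of_mem_support hw (by simp) hxy.ne' hyc.ne hy

lemma IsWTExtreme.closedNbhd_eq_of_adj {x y : V} (hx : IsWTExtreme G x) (hy : IsWTExtreme G y)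
    (hxy : G.Adj x y) : closedNbhd G x = closedNbhd G y :=
  (hx.closedNbhd_subset_of_adj hxy.symm).antisymm (hy.closedNbhd_subset_of_adj hxy)

lemma not_isWTExtreme_of_dist_le (hconn : G.Connected) {x y z : V}
    (hx : IsWTExtreme G x) (hy : IsWTExtreme G y) (hxy : closedNbhd G x ≠ closedNbhd G y)
    (hzx : closedNbhd G z ≠ closedNbhd G x) (hzy : closedNbhd G z ≠ closedNbhd G y)
    (hdx : G.dist z x ≤ G.dist x y) (hdy : G.dist z y ≤ G.dist x y) : ¬ IsWTExtreme G z := by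
  intro hz
  obtain ⟨w, hw, hzw⟩ := exists_isWeaklyTollWalk_mem_support hconn (ne_of_apply_ne _ hxy)
    (ne_of_apply_ne _ hzx) (ne_of_apply_ne _ hzy) (hxy ∘ hx.closedNbhd_eq_of_adj hy)
    (hzx ∘ hz.closedNbhd_eq_of_adj hx) (hzy ∘ hz.closedNbhd_eq_of_adj hy) hdx hdy
  exact not_isWTExtreme_of_mem_support hw hzw (ne_of_apply_ne _ hzx) (ne_of_apply_ne _ hzy) hz

lemma IsWTExtreme.mem_twinClass_union (hconn : G.Connected) {x y z : V}
    (hx : IsWTExtreme G x) (hy : IsWTExtreme G y) (hz : IsWTExtreme G z)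
    (hyx : y ∉ twinClass G x) : z ∈ twinClass G x ∪ twinClass G y := by
  by_contra hzxy
  obtain ⟨hzx, hzy⟩ : closedNbhd G z ≠ closedNbhd G x ∧ closedNbhd G z ≠ closedNbhd G y := by
    simpa [twinClass] using hzxy
  have hyx : closedNbhd G y ≠ closedNbhd G x := hyx
  have := G.dist_comm (u := x) (v := y)
  have := G.dist_comm (u := y) (v := z)
  have := G.dist_comm (u := z) (v := x)
  by_cases hdz : G.dist z x ≤ G.dist x y ∧ G.dist z y ≤ G.dist x y
  · exact not_isWTExtreme_of_dist_le hconn hx hy hyx.symm hzx hzy hdz.1 hdz.2 hz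
  by_cases hdx : G.dist x z ≤ G.dist z y ∧ G.dist x y ≤ G.dist z y
  · exact not_isWTExtreme_of_dist_le hconn hz hy hzy hzx.symm hyx.symm hdx.1 hdx.2 hx
  exact not_isWTExtreme_of_dist_le hconn hx hz hzx.symm hyx hzy.symm (by omega) (by omega) hy

end

theorem stmt13_general (G : SimpleGraph V) (hconn : G.Connected) :
    ∃ u v : V, {x : V | WTConvex G ({x}ᶜ : Set V)} ⊆ twinClass G u ∪ twinClass G v := by
  by_contra! h
  obtain ⟨u⟩ := hconn.nonempty
  obtain ⟨x, hx, -⟩ := Set.not_subset.mp (h u u)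
  obtain ⟨y, hy, hyx⟩ := Set.not_subset.mp (h x x)
  obtain ⟨z, hz, hzxy⟩ := Set.not_subset.mp (h x y)
  exact hzxy (IsWTExtreme.mem_twinClass_union hconn hx hy hz fun hyx' => hyx (Or.inl hyx'))

/-- the weakly toll extreme vertices of a connected non-complete
graph are contained in the union of at most two true-twin classes. -/
theorem stmt13 [Fintype V] (G : SimpleGraph V) (hconn : G.Connected)
    (hnc : ∃ a b : V, a ≠ b ∧ ¬ G.Adj a b) :
    ∃ u v : V, {x : V | WTConvex G ({x}ᶜ : Set V)} ⊆ twinClass G u ∪ twinClass G v :=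
  stmt13_general G hconn
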